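/- Suppose 2·Σ_{j=1}^m ζ_j + max_{j} ν_j − min_{j} ζ_j < 1. Then every x ∈ ℂ^N supported on the union S = S_1 ∪ … ∪ S_m is the unique ℓ1 minimizer for the observation y = Kx; that is, basis pursuit exactly recovers the sparse representation of any periodic mixture whose hidden periods correspond to the sets S_1,…,S_m. -/

import Mathlib

open Matrix Finset

noncomputable section

/-- The Hermitian inner product `⟨u,v⟩ = ∑ l, conj (u l) * v l` on `ℂ^L`. -/
def ipC {L : ℕ} (u v : Fin L → ℂ) : ℂ := ∑ l, star (u l) * v l

/-- The `j`-th column `k_j` of the dictionary `K`. -/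
def col {L N : ℕ} (K : Matrix (Fin L) (Fin N) ℂ) (j : Fin N) : Fin L → ℂ := fun l => K l j

/-- The submatrix `K_S` of the columns of `K` indexed by `S`. -/
def subMat {L N : ℕ} (K : Matrix (Fin L) (Fin N) ℂ) (S : Finset (Fin N)) :
    Matrix (Fin L) {j : Fin N // j ∈ S} ℂ := Matrix.of fun l j => K l j.1

/-- The Gram matrix `K_Sᴴ K_S`. -/
def gram {L N : ℕ} (K : Matrix (Fin L) (Fin N) ℂ) (S : Finset (Fin N)) :
    Matrix {j : Fin N // j ∈ S} {j : Fin N // j ∈ S} ℂ := (subMat K S)ᴴ * subMat K S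

/-- The vector `(K_Sᴴ K_S)⁻¹ K_Sᴴ k_j`. -/
def ercVec {L N : ℕ} (K : Matrix (Fin L) (Fin N) ℂ) (S : Finset (Fin N)) (j : Fin N) :
    {i : Fin N // i ∈ S} → ℂ := ((gram K S)⁻¹ * (subMat K S)ᴴ) *ᵥ _root_.col K j

/-- The ℓ1 norm of a complex vector, as a real number. -/
def l1 {ι : Type} [Fintype ι] (v : ι → ℂ) : ℝ := ∑ i, ‖v i‖

/-- The ℓ1 norm of a complex vector, as a nonnegative real number. -/
def l1n {ι : Type} [Fintype ι] (v : ι → ℂ) : NNReal := ∑ i, ‖v i‖₊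

/-!
Let `h = z - x ≠ 0` lie in the kernel of `K`. Pairing `K h = 0` with a unit column `k_i`
gives `|h_i| ≤ ∑_{l ≠ i} |⟨k_l, k_i⟩| |h_l|`; summed over a block `S_j` this yields
`‖h_{S_j}‖₁ ≤ ν_j ‖h_{S_j}‖₁ + ζ_j ‖h_{S_jᶜ}‖₁`, hence
`(1 - max ν + min ζ) ‖h_{S_j}‖₁ ≤ ζ_j ‖h‖₁`. Summing over `j`, the coherence hypothesis
gives the null space property `‖h_S‖₁ < ‖h_{Sᶜ}‖₁`, and the triangle inequality turns
this into `‖x‖₁ < ‖z‖₁`.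
-/

lemma sum_biUnion_le_sum_sum {α β : Type*} [DecidableEq β] (s : Finset α) (t : α → Finset β)
    {f : β → ℝ} (hf : 0 ≤ f) : ∑ i ∈ s.biUnion t, f i ≤ ∑ a ∈ s, ∑ i ∈ t a, f i := by
  rw [← sup_eq_biUnion]
  refine s.apply_sup_le_sum (f := fun u => ∑ i ∈ u, f i) sum_empty fun {u v} => ?_
  rw [sup_eq_union, ← sum_union_inter]
  exact le_add_of_nonneg_right (sum_nonneg fun i _ => hf i)

lemma sum_norm_le_coe_sup_sum_nnnorm {ι κ E : Type*} [SeminormedAddCommGroup E] {s : Finset κ}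
    (t : κ → Finset ι) (f : κ → ι → E) {k : κ} (hk : k ∈ s) :
    ∑ i ∈ t k, ‖f k i‖ ≤ ((s.sup fun k => ∑ i ∈ t k, ‖f k i‖₊ : NNReal) : ℝ) := by
  have := NNReal.coe_le_coe.2 (le_sup (f := fun k => ∑ i ∈ t k, ‖f k i‖₊) hk)
  simpa only [NNReal.coe_sum, coe_nnnorm] using this

lemma l1_lt_l1_of_sum_norm_sub_lt {ι : Type} [Fintype ι] [DecidableEq ι] {S : Finset ι}
    {x z : ι → ℂ} (hx : ∀ j ∉ S, x j = 0)
    (hnull : ∑ i ∈ S, ‖z i - x i‖ < ∑ i ∈ Sᶜ, ‖z i - x i‖) : l1 x < l1 z := by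
  have hxS : l1 x = ∑ i ∈ S, ‖x i‖ := by
    rw [l1, ← sum_add_sum_compl S, add_eq_left]
    exact sum_eq_zero fun i hi => by rw [hx i (mem_compl.1 hi), norm_zero]
  have hzSc : ∑ i ∈ Sᶜ, ‖z i - x i‖ = ∑ i ∈ Sᶜ, ‖z i‖ :=
    sum_congr rfl fun i hi => by rw [hx i (mem_compl.1 hi), sub_zero]
  have htri : ∑ i ∈ S, ‖x i‖ ≤ ∑ i ∈ S, ‖z i‖ + ∑ i ∈ S, ‖z i - x i‖ := by
    rw [← sum_add_distrib]
    exact sum_le_sum fun i _ => norm_le_norm_add_norm_sub' (x i) (z i) |>.trans_eq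
      (by rw [norm_sub_rev])
  rw [hxS, l1, ← sum_add_sum_compl S fun i => ‖z i‖]
  linarith

lemma sum_le_of_le_sum_erase {ι : Type*} [Fintype ι] [DecidableEq ι] {c : ι → ι → ℝ}
    {a : ι → ℝ} (ha : 0 ≤ a) (hrow : ∀ i, a i ≤ ∑ l ∈ univ.erase i, c l i * a l)
    {T : Finset ι} {ν ζ : ℝ} (hν : ∀ l ∈ T, ∑ i ∈ T.erase l, c l i ≤ ν)
    (hζ : ∀ l ∉ T, ∑ i ∈ T, c l i ≤ ζ) :
    ∑ i ∈ T, a i ≤ ν * ∑ i ∈ T, a i + ζ * ∑ i ∈ Tᶜ, a i := by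
  have hswap : ∑ i ∈ T, ∑ l ∈ univ.erase i, c l i * a l
      = ∑ l, (∑ i ∈ T.erase l, c l i) * a l := by
    simp_rw [sum_mul]
    exact sum_comm' fun i l => by simp only [mem_erase, mem_univ, and_true]; tauto
  calc ∑ i ∈ T, a i ≤ ∑ i ∈ T, ∑ l ∈ univ.erase i, c l i * a l := sum_le_sum fun i _ => hrow i
    _ = ∑ l ∈ T, (∑ i ∈ T.erase l, c l i) * a l + ∑ l ∈ Tᶜ, (∑ i ∈ T, c l i) * a l := by
      rw [hswap, ← sum_add_sum_compl T]
      congr 1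
      exact sum_congr rfl fun l hl => by rw [erase_eq_of_notMem (mem_compl.1 hl)]
    _ ≤ ∑ l ∈ T, ν * a l + ∑ l ∈ Tᶜ, ζ * a l := by
      gcongr with l hl l hl
      · exact ha l
      · exact hν l hl
      · exact ha l
      · exact hζ l (mem_compl.1 hl)
    _ = ν * ∑ i ∈ T, a i + ζ * ∑ i ∈ Tᶜ, a i := by rw [mul_sum, mul_sum]

lemma mul_sum_le_of_block_bound {ι : Type*} [Fintype ι] [DecidableEq ι] {a : ι → ℝ} (ha : 0 ≤ a)
    {T : Finset ι} {ν ζ M μ : ℝ} (hνM : ν ≤ M) (hμζ : μ ≤ ζ)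
    (hblock : ∑ i ∈ T, a i ≤ ν * ∑ i ∈ T, a i + ζ * ∑ i ∈ Tᶜ, a i) :
    (1 - M + μ) * ∑ i ∈ T, a i ≤ ζ * ∑ i, a i := by
  have hT : 0 ≤ ∑ i ∈ T, a i := sum_nonneg fun i _ => ha i
  rw [← sum_add_sum_compl T a]
  nlinarith [mul_nonneg (sub_nonneg.2 hνM) hT, mul_nonneg (sub_nonneg.2 hμζ) hT]

lemma sum_biUnion_lt_sum_compl {ι κ : Type*} [Fintype ι] [DecidableEq ι] [Fintype κ]
    {a : ι → ℝ} (ha : 0 ≤ a) (hpos : 0 < ∑ i, a i) (t : κ → Finset ι) {ν ζ : κ → ℝ} {M μ : ℝ}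
    (hνM : ∀ j, ν j ≤ M) (hμζ : ∀ j, μ ≤ ζ j) (hζ : 0 ≤ ζ) (hcoh : 2 * ∑ j, ζ j + M - μ < 1)
    (hblock : ∀ j, ∑ i ∈ t j, a i ≤ ν j * ∑ i ∈ t j, a i + ζ j * ∑ i ∈ (t j)ᶜ, a i) :
    ∑ i ∈ univ.biUnion t, a i < ∑ i ∈ (univ.biUnion t)ᶜ, a i := by
  have hζsum : 0 ≤ ∑ j, ζ j := sum_nonneg fun j _ => hζ j
  have hD : 0 ≤ 1 - M + μ := by linarith
  have hunion : (1 - M + μ) * ∑ i ∈ univ.biUnion t, a i ≤ (∑ j, ζ j) * ∑ i, a i :=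
    calc (1 - M + μ) * ∑ i ∈ univ.biUnion t, a i
        ≤ (1 - M + μ) * ∑ j, ∑ i ∈ t j, a i := by gcongr; exact sum_biUnion_le_sum_sum _ _ ha
      _ ≤ (∑ j, ζ j) * ∑ i, a i := by
        rw [mul_sum, sum_mul]
        exact sum_le_sum fun j _ => mul_sum_le_of_block_bound ha (hνM j) (hμζ j) (hblock j)
  have htotal := sum_add_sum_compl (univ.biUnion t) a
  nlinarith

section Dictionary

variable {L N : ℕ} (K : Matrix (Fin L) (Fin N) ℂ)

lemma norm_ipC_comm (u v : Fin L → ℂ) : ‖ipC u v‖ = ‖ipC v u‖ := by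
  have : ipC v u = star (ipC u v) := by simp [ipC, star_sum, mul_comm]
  rw [this, norm_star]

lemma ipC_col_self {i : Fin N} (hunit : ∑ l, ‖K l i‖ ^ 2 = 1) :
    ipC (_root_.col K i) (_root_.col K i) = 1 := by
  have : ipC (_root_.col K i) (_root_.col K i) = ((∑ l, ‖K l i‖ ^ 2 : ℝ) : ℂ) := by
    push_cast
    refine sum_congr rfl fun l _ => ?_
    rw [_root_.col, Complex.star_def, mul_comm, Complex.mul_conj']
  rw [this, hunit, Complex.ofReal_one]

lemma sum_ipC_col_mul_eq_zero {h : Fin N → ℂ} (hKh : K *ᵥ h = 0) (i : Fin N) :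
    ∑ l, ipC (_root_.col K i) (_root_.col K l) * h l = 0 := by
  simp only [ipC, _root_.col, sum_mul, mul_assoc]
  rw [sum_comm]
  have hrow : ∀ t, ∑ l, K t l * h l = 0 := fun t => congrFun hKh t
  simp only [← mul_sum, hrow, mul_zero, sum_const_zero]

lemma norm_le_sum_norm_ipC_mul {i : Fin N} (hunit : ∑ l, ‖K l i‖ ^ 2 = 1) {h : Fin N → ℂ}
    (hKh : K *ᵥ h = 0) :
    ‖h i‖ ≤ ∑ l ∈ univ.erase i, ‖ipC (_root_.col K l) (_root_.col K i)‖ * ‖h l‖ := by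
  have hsum := sum_ipC_col_mul_eq_zero K hKh i
  rw [← add_sum_erase _ _ (mem_univ i), ipC_col_self K hunit, one_mul,
    add_eq_zero_iff_eq_neg] at hsum
  calc ‖h i‖ = ‖∑ l ∈ univ.erase i, ipC (_root_.col K i) (_root_.col K l) * h l‖ := by
        rw [hsum, norm_neg]
    _ ≤ ∑ l ∈ univ.erase i, ‖ipC (_root_.col K i) (_root_.col K l) * h l‖ := norm_sum_le _ _
    _ = ∑ l ∈ univ.erase i, ‖ipC (_root_.col K l) (_root_.col K i)‖ * ‖h l‖ := by
        simp_rw [norm_mul, norm_ipC_comm (_root_.col K i)]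

end Dictionary

theorem stmt7_general (L N m : ℕ) (hm : 1 ≤ m)
    (K : Matrix (Fin L) (Fin N) ℂ)
    (hunit : ∀ j : Fin N, ∑ l, ‖K l j‖ ^ 2 = 1)
    (Ssets : Fin m → Finset (Fin N))
    (S : Finset (Fin N)) (hS : S = Finset.univ.biUnion Ssets)
    (ζ ν : Fin m → ℝ)
    (hζ : ∀ j, ζ j =
      (((Ssets j)ᶜ.sup fun i => ∑ l ∈ Ssets j, ‖ipC (_root_.col K i) (_root_.col K l)‖₊ : NNReal) : ℝ))
    (hν : ∀ j, ν j =
      (((Ssets j).sup fun i => ∑ l ∈ (Ssets j).erase i, ‖ipC (_root_.col K i) (_root_.col K l)‖₊ : NNReal) : ℝ))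
    (h1 : 2 * (∑ j, ζ j)
        + Finset.univ.sup' (Finset.univ_nonempty_iff.mpr ⟨⟨0, hm⟩⟩) ν
        - Finset.univ.inf' (Finset.univ_nonempty_iff.mpr ⟨⟨0, hm⟩⟩) ζ < 1) :
    ∀ x : Fin N → ℂ, (∀ j ∉ S, x j = 0) →
      ∀ z : Fin N → ℂ, K *ᵥ z = K *ᵥ x → z ≠ x → l1 x < l1 z := by
  intro x hx z hKz hne
  subst hS
  have hKh : K *ᵥ (z - x) = 0 := by rw [mulVec_sub, hKz, sub_self]
  have hpos : 0 < ∑ i, ‖z i - x i‖ := by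
    obtain ⟨i, hi⟩ := Function.ne_iff.1 hne
    exact sum_pos' (fun i _ => norm_nonneg _) ⟨i, mem_univ i, norm_pos_iff.2 (sub_ne_zero.2 hi)⟩
  have hζbound : ∀ j, ∀ l ∉ Ssets j,
      ∑ i ∈ Ssets j, ‖ipC (_root_.col K l) (_root_.col K i)‖ ≤ ζ j := fun j l hl => by
    rw [hζ j]
    exact sum_norm_le_coe_sup_sum_nnnorm (fun _ => Ssets j)
      (fun l i => ipC (_root_.col K l) (_root_.col K i)) (mem_compl.2 hl)
  have hνbound : ∀ j, ∀ l ∈ Ssets j,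
      ∑ i ∈ (Ssets j).erase l, ‖ipC (_root_.col K l) (_root_.col K i)‖ ≤ ν j := fun j l hl => by
    rw [hν j]
    exact sum_norm_le_coe_sup_sum_nnnorm (Ssets j).erase
      (fun l i => ipC (_root_.col K l) (_root_.col K i)) hl
  refine l1_lt_l1_of_sum_norm_sub_lt hx ?_
  refine sum_biUnion_lt_sum_compl (fun i => norm_nonneg _) hpos Ssets
    (fun j => le_sup' ν (mem_univ j)) (fun j => inf'_le ζ (mem_univ j))
    (fun j => by rw [hζ j]; positivity) h1 fun j => ?_
  exact sum_le_of_le_sum_erase (fun i => norm_nonneg _)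
    (fun i => norm_le_sum_norm_ipC_mul K (hunit i) hKh) (hνbound j) (hζbound j)

/-- Theorem 2, basis-pursuit recovery for mixtures: for index sets
`S_1, …, S_m` with union `S` and restricted coherences `ζ_j`, `ν_j`, if
`2 ∑_j ζ_j + max_j ν_j - min_j ζ_j < 1`, then every `x` supported on `S` is the unique
ℓ1 minimizer for the observation `y = K x`. -/
theorem stmt7 (L N m : ℕ) (hL : 1 ≤ L) (hN : 1 ≤ N) (hm : 1 ≤ m)
    (K : Matrix (Fin L) (Fin N) ℂ)
    (hunit : ∀ j : Fin N, ∑ l, ‖K l j‖ ^ 2 = 1)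
    (Ssets : Fin m → Finset (Fin N))
    (S : Finset (Fin N)) (hS : S = Finset.univ.biUnion Ssets)
    (ζ ν : Fin m → ℝ)
    (hζ : ∀ j, ζ j =
      (((Ssets j)ᶜ.sup fun i => ∑ l ∈ Ssets j, ‖ipC (_root_.col K i) (_root_.col K l)‖₊ : NNReal) : ℝ))
    (hν : ∀ j, ν j =
      (((Ssets j).sup fun i => ∑ l ∈ (Ssets j).erase i, ‖ipC (_root_.col K i) (_root_.col K l)‖₊ : NNReal) : ℝ))
    (h1 : 2 * (∑ j, ζ j)
        + Finset.univ.sup' (Finset.univ_nonempty_iff.mpr ⟨⟨0, hm⟩⟩) ν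
        - Finset.univ.inf' (Finset.univ_nonempty_iff.mpr ⟨⟨0, hm⟩⟩) ζ < 1) :
    ∀ x : Fin N → ℂ, (∀ j ∉ S, x j = 0) →
      ∀ z : Fin N → ℂ, K *ᵥ z = K *ᵥ x → z ≠ x → l1 x < l1 z :=
  stmt7_general L N m hm K hunit Ssets S hS ζ ν hζ hν h1
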